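/- With the same setup, R_Z(h^s) < R_Z(h^t) (strict inequality) if and only if R^{h^t}_{err(h^t)}(h^s)·R_Z(h^t) > R^{h^t}_{acc(h^t)}(h^s)·(1 − R_Z(h^t)), assuming acc(h^t) and err(h^t) are both nonempty. -/

import Mathlib

open Finset

variable {ι X : Type*}

/-- Empirical 0/1 risk of classifier `h` on labeled set `S`. -/
noncomputable def risk (S : Finset ι) (x : ι → X) (y : ι → Bool) (h : X → Bool) : ℝ :=
  (S.filter (fun i => h (x i) ≠ y i)).card / S.card

/-- Disagreement rate of student `hs` with teacher `ht` on set `S`. -/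
noncomputable def tsRisk (S : Finset ι) (x : ι → X) (ht hs : X → Bool) : ℝ :=
  (S.filter (fun i => ht (x i) ≠ hs (x i))).card / S.card

/-- Points of `Z` where the teacher is correct. -/
def accSet (Z : Finset ι) (x : ι → X) (y : ι → Bool) (ht : X → Bool) : Finset ι :=
  Z.filter (fun i => ht (x i) = y i)

/-- Points of `Z` where the teacher is wrong. -/
def errSet (Z : Finset ι) (x : ι → X) (y : ι → Bool) (ht : X → Bool) : Finset ι :=
  Z.filter (fun i => ht (x i) ≠ y i)

/-!
On `acc(h^t)` the student errs exactly where it disagrees with the teacher, on `err(h^t)` exactly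
where it agrees with it. Hence, with `d_acc`, `d_err` the numbers of disagreements on the two
parts, `R_Z(h^s) = R_Z(h^t) + d_acc / |Z| - d_err / |Z|`, and the two products of the statement
are `d_acc / |Z|` and `d_err / |Z|`.
-/

def disagreeSet (S : Finset ι) (x : ι → X) (ht hs : X → Bool) : Finset ι :=
  S.filter fun i => ht (x i) ≠ hs (x i)

section

variable (x : ι → X) (y : ι → Bool) (ht hs : X → Bool)

lemma tsRisk_mul_card_div (S : Finset ι) (n : ℝ) :
    tsRisk S x ht hs * (S.card / n) = (disagreeSet S x ht hs).card / n := by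
  rcases S.eq_empty_or_nonempty with rfl | hS
  · simp [tsRisk, disagreeSet]
  · exact div_mul_div_cancel₀ (by exact_mod_cast hS.card_pos.ne')

lemma risk_eq_card_errSet_div (Z : Finset ι) :
    risk Z x y ht = (errSet Z x y ht).card / Z.card :=
  rfl

lemma card_accSet_add_card_errSet (Z : Finset ι) :
    (accSet Z x y ht).card + (errSet Z x y ht).card = Z.card :=
  card_filter_add_card_filter_not _

lemma one_sub_risk_eq_card_accSet_div {Z : Finset ι} (hZ : Z.Nonempty) :
    1 - risk Z x y ht = (accSet Z x y ht).card / Z.card := by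
  have hZ' : (Z.card : ℝ) ≠ 0 := by exact_mod_cast hZ.card_pos.ne'
  rw [eq_div_iff hZ', sub_mul, risk_eq_card_errSet_div, div_mul_cancel₀ _ hZ',
    ← card_accSet_add_card_errSet x y ht]
  push_cast
  ring

lemma errSet_accSet (Z : Finset ι) :
    errSet (accSet Z x y ht) x y hs = disagreeSet (accSet Z x y ht) x ht hs := by
  refine filter_congr fun i hi => ?_
  rw [← (mem_filter.mp hi).2, ne_comm]

lemma errSet_errSet (Z : Finset ι) :
    errSet (errSet Z x y ht) x y hs =
      (errSet Z x y ht).filter fun i => ¬ ht (x i) ≠ hs (x i) := by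
  refine filter_congr fun i hi => ?_
  have hwrong := (mem_filter.mp hi).2
  revert hwrong
  cases ht (x i) <;> cases hs (x i) <;> cases y i <;> decide

lemma card_errSet_add_card_disagreeSet_errSet (Z : Finset ι) :
    (errSet Z x y hs).card + (disagreeSet (errSet Z x y ht) x ht hs).card =
      (disagreeSet (accSet Z x y ht) x ht hs).card + (errSet Z x y ht).card := by
  have hsplit : (errSet (accSet Z x y ht) x y hs).card + (errSet (errSet Z x y ht) x y hs).card =
      (errSet Z x y hs).card := by
    simp only [accSet, errSet, filter_comm _ (fun i => hs (x i) ≠ y i)]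
    exact card_filter_add_card_filter_not _
  have hagree : (disagreeSet (errSet Z x y ht) x ht hs).card
      + (errSet (errSet Z x y ht) x y hs).card = (errSet Z x y ht).card := by
    rw [errSet_errSet]
    exact card_filter_add_card_filter_not _
  rw [errSet_accSet] at hsplit
  omega

theorem risk_eq_risk_add_tsRisk_sub_tsRisk (Z : Finset ι) :
    risk Z x y hs = risk Z x y ht + tsRisk (accSet Z x y ht) x ht hs * (1 - risk Z x y ht)
      - tsRisk (errSet Z x y ht) x ht hs * risk Z x y ht := by
  have hacc : tsRisk (accSet Z x y ht) x ht hs * (1 - risk Z x y ht) =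
      (disagreeSet (accSet Z x y ht) x ht hs).card / Z.card := by
    rcases Z.eq_empty_or_nonempty with rfl | hZ
    · simp [tsRisk, accSet, disagreeSet]
    · rw [one_sub_risk_eq_card_accSet_div x y ht hZ, tsRisk_mul_card_div]
  have herr : tsRisk (errSet Z x y ht) x ht hs * risk Z x y ht =
      (disagreeSet (errSet Z x y ht) x ht hs).card / Z.card :=
    tsRisk_mul_card_div x ht hs _ _
  have hcount : ((errSet Z x y hs).card + (disagreeSet (errSet Z x y ht) x ht hs).card : ℝ) =
      (disagreeSet (accSet Z x y ht) x ht hs).card + (errSet Z x y ht).card := by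
    exact_mod_cast card_errSet_add_card_disagreeSet_errSet x y ht hs Z
  rw [hacc, herr, risk_eq_card_errSet_div, risk_eq_card_errSet_div, ← add_div, ← sub_div]
  congr 1
  linarith

end

theorem truth_over_teacher_strict_general (Z : Finset ι) (x : ι → X) (y : ι → Bool) (ht hs : X → Bool) :
    risk Z x y hs < risk Z x y ht ↔
      tsRisk (errSet Z x y ht) x ht hs * risk Z x y ht >
        tsRisk (accSet Z x y ht) x ht hs * (1 - risk Z x y ht) := by
  rw [risk_eq_risk_add_tsRisk_sub_tsRisk x y ht hs Z]
  constructor <;> intro h <;> linarith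

theorem truth_over_teacher_strict (Z : Finset ι) (x : ι → X) (y : ι → Bool) (ht hs : X → Bool)
    (hacc : (accSet Z x y ht).Nonempty) (herr : (errSet Z x y ht).Nonempty) :
    risk Z x y hs < risk Z x y ht ↔
      tsRisk (errSet Z x y ht) x ht hs * risk Z x y ht >
        tsRisk (accSet Z x y ht) x ht hs * (1 - risk Z x y ht) :=
  truth_over_teacher_strict_general Z x y ht hs
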